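/- Let X have probability density p_T(t) on [0,T] (conditional detection time of a double-exponential photon (a,b)) and let Y be uniform on [0,T] (a dark count), independent of X. Then P(|X - Y| ≤ τ) · p_det(T)/η = (a/(2b(a-2b)T))[1 + 2bτ - e^{-2bτ} + e^{-2bT}(1 - 2bτ - e^{2bτ})] - (2b/(a(a-2b)T))[1 + aτ - e^{-aτ} + e^{-aT}(1 - aτ - e^{aτ})]. -/

import Mathlib

open MeasureTheory

noncomputable section

def pdens (a b η t : ℝ) : ℝ :=
  2 * a * b * η / (a - 2 * b) * (Real.exp (-(2 * b * t)) - Real.exp (-(a * t)))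

def pdet (a b η T : ℝ) : ℝ :=
  η * (1 - a / (a - 2 * b) * Real.exp (-(2 * b * T)) +
    2 * b / (a - 2 * b) * Real.exp (-(a * T)))

/-!
For `x ∈ [0, T]` the inner integral over `y` is the length of `[x - τ, x + τ] ∩ [0, T]`, which is
`2τ - (τ - x)⁺ - (x - (T - τ))⁺`. Against each exponential `e^{-λx}` making up the density this
integrates in closed form to `(1 + λτ - e^{-λτ} + e^{-λT}(1 - λτ - e^{λτ})) / λ²`, and the
normalisation cancels because `p_det(T)` is the (positive) integral of `p` over `[0, T]`.
-/

open Real Set intervalIntegral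

theorem integral_exp_neg_mul {l : ℝ} (hl : l ≠ 0) (c d : ℝ) :
    ∫ x in c..d, exp (-(l * x)) = (exp (-(l * c)) - exp (-(l * d))) / l := by
  have hderiv (x : ℝ) : HasDerivAt (fun x => -exp (-(l * x)) / l) (exp (-(l * x))) x := by
    have hlin : HasDerivAt (fun x => -(l * x)) (-l) x := by
      simpa using ((hasDerivAt_id x).const_mul l).fun_neg
    exact (hlin.exp.fun_neg.div_const l).congr_deriv (by field_simp)
  rw [integral_eq_sub_of_hasDerivAt (fun x _ => hderiv x)
    (Continuous.intervalIntegrable (by fun_prop) _ _)]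
  ring

theorem integral_sub_mul_exp_neg_mul {l : ℝ} (hl : l ≠ 0) (s c d : ℝ) :
    ∫ x in c..d, (x - s) * exp (-(l * x)) =
      ((l * (c - s) + 1) * exp (-(l * c)) - (l * (d - s) + 1) * exp (-(l * d))) / l ^ 2 := by
  have hderiv (x : ℝ) : HasDerivAt (fun x => -(l * (x - s) + 1) * exp (-(l * x)) / l ^ 2)
      ((x - s) * exp (-(l * x))) x := by
    have hlin : HasDerivAt (fun x => -(l * x)) (-l) x := by
      simpa using ((hasDerivAt_id x).const_mul l).fun_neg
    have hpoly : HasDerivAt (fun x => -(l * (x - s) + 1)) (-l) x := by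
      simpa using ((((hasDerivAt_id x).sub_const s).const_mul l).add_const 1).fun_neg
    exact ((hpoly.fun_mul hlin.exp).div_const (l ^ 2)).congr_deriv (by field_simp; ring)
  rw [integral_eq_sub_of_hasDerivAt (fun x _ => hderiv x)
    (Continuous.intervalIntegrable (by fun_prop) _ _)]
  ring

theorem integral_max_const_sub_zero_mul {f : ℝ → ℝ} (hf : Continuous f) {a b c : ℝ}
    (hac : a ≤ c) (hcb : c ≤ b) :
    ∫ x in a..b, max (c - x) 0 * f x = ∫ x in a..c, (c - x) * f x := by
  have hint (u v : ℝ) : IntervalIntegrable (fun x => max (c - x) 0 * f x) volume u v :=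
    Continuous.intervalIntegrable (by fun_prop) u v
  rw [← integral_add_adjacent_intervals (hint a c) (hint c b)]
  have hleft : ∫ x in a..c, max (c - x) 0 * f x = ∫ x in a..c, (c - x) * f x :=
    integral_congr fun x hx => by
      rw [uIcc_of_le hac] at hx
      rw [max_eq_left (by linarith [hx.2])]
  have hright : ∫ x in c..b, max (c - x) 0 * f x = 0 := by
    rw [integral_congr (g := fun _ => 0) fun x hx => ?_, intervalIntegral.integral_zero]
    rw [uIcc_of_le hcb] at hx
    simp [max_eq_right (by linarith [hx.1] : c - x ≤ 0)]
  rw [hleft, hright, add_zero]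

theorem integral_max_sub_const_zero_mul {f : ℝ → ℝ} (hf : Continuous f) {a b c : ℝ}
    (hac : a ≤ c) (hcb : c ≤ b) :
    ∫ x in a..b, max (x - c) 0 * f x = ∫ x in c..b, (x - c) * f x := by
  have hint (u v : ℝ) : IntervalIntegrable (fun x => max (x - c) 0 * f x) volume u v :=
    Continuous.intervalIntegrable (by fun_prop) u v
  rw [← integral_add_adjacent_intervals (hint a c) (hint c b)]
  have hleft : ∫ x in a..c, max (x - c) 0 * f x = 0 := by
    rw [integral_congr (g := fun _ => 0) fun x hx => ?_, intervalIntegral.integral_zero]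
    rw [uIcc_of_le hac] at hx
    simp [max_eq_right (by linarith [hx.2] : x - c ≤ 0)]
  have hright : ∫ x in c..b, max (x - c) 0 * f x = ∫ x in c..b, (x - c) * f x :=
    integral_congr fun x hx => by
      rw [uIcc_of_le hcb] at hx
      rw [max_eq_left (by linarith [hx.1])]
  rw [hleft, hright, zero_add]

/-- The length of `[x - τ, x + τ] ∩ [0, T]`. -/
def windowLength (τ T x : ℝ) : ℝ :=
  max (min (x + τ) T - max (x - τ) 0) 0

@[fun_prop]
theorem continuous_windowLength (τ T : ℝ) : Continuous (windowLength τ T) := by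
  unfold windowLength
  fun_prop

theorem integral_ite_abs_sub_le_eq_windowLength (x τ T : ℝ) (hT : 0 ≤ T) :
    ∫ y in (0:ℝ)..T, (if |x - y| ≤ τ then (1:ℝ) else 0) = windowLength τ T x := by
  have hind : (fun y => if |x - y| ≤ τ then (1:ℝ) else 0) =
      (Icc (x - τ) (x + τ)).indicator 1 := by
    ext y
    simp only [indicator, mem_Icc_iff_abs_le, Pi.one_apply]
  rw [hind, integral_of_le hT, ← integral_Icc_eq_integral_Ioc,
    integral_indicator_one measurableSet_Icc, measureReal_restrict_apply measurableSet_Icc,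
    Icc_inter_Icc, Real.volume_real_Icc]
  rfl

theorem windowLength_eq_of_mem_Icc {τ T x : ℝ} (hτ : 0 ≤ τ) (hx : x ∈ Icc 0 T) :
    windowLength τ T x = 2 * τ - max (τ - x) 0 - max (x - (T - τ)) 0 := by
  obtain ⟨hx0, hxT⟩ := hx
  simp only [windowLength, max_def, min_def]
  split_ifs <;> linarith

theorem integral_windowLength_mul_exp_neg_mul {l : ℝ} (hl : l ≠ 0) {τ T : ℝ}
    (hτ0 : 0 ≤ τ) (hτT : τ ≤ T) :
    ∫ x in (0:ℝ)..T, windowLength τ T x * exp (-(l * x)) =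
      (1 + l * τ - exp (-(l * τ)) + exp (-(l * T)) * (1 - l * τ - exp (l * τ))) / l ^ 2 := by
  have hT : 0 ≤ T := hτ0.trans hτT
  have hexp : Continuous fun x => exp (-(l * x)) := by fun_prop
  rw [integral_congr (g := fun x => 2 * τ * exp (-(l * x)) - max (τ - x) 0 * exp (-(l * x))
      - max (x - (T - τ)) 0 * exp (-(l * x))) fun x hx => by
    rw [uIcc_of_le hT] at hx
    simp only [windowLength_eq_of_mem_Icc hτ0 hx, sub_mul]]
  rw [integral_sub (Continuous.intervalIntegrable (by fun_prop) _ _)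
      (Continuous.intervalIntegrable (by fun_prop) _ _),
    integral_sub (Continuous.intervalIntegrable (by fun_prop) _ _)
      (Continuous.intervalIntegrable (by fun_prop) _ _),
    integral_max_const_sub_zero_mul hexp hτ0 hτT,
    integral_max_sub_const_zero_mul hexp (by linarith) (by linarith),
    intervalIntegral.integral_const_mul]
  have hflip : ∫ x in (0:ℝ)..τ, (τ - x) * exp (-(l * x)) =
      -∫ x in (0:ℝ)..τ, (x - τ) * exp (-(l * x)) := by
    rw [← intervalIntegral.integral_neg]
    congr 1 with x
    ring
  have hshift : exp (-(l * (T - τ))) = exp (-(l * T)) * exp (l * τ) := by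
    rw [← exp_add]
    ring_nf
  rw [hflip, integral_exp_neg_mul hl, integral_sub_mul_exp_neg_mul hl,
    integral_sub_mul_exp_neg_mul hl, hshift, exp_neg (l * τ), mul_zero, neg_zero, exp_zero]
  field_simp
  ring

theorem pdens_pos {a b η x : ℝ} (ha : 0 < a) (hb : 0 < b) (hη : 0 < η) (hab : a ≠ 2 * b)
    (hx : 0 < x) : 0 < pdens a b η x := by
  have hsign : 0 < (exp (-(2 * b * x)) - exp (-(a * x))) / (a - 2 * b) := by
    rcases hab.lt_or_gt with h | h
    · refine div_pos_of_neg_of_neg ?_ (by linarith)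
      exact sub_neg.2 (exp_lt_exp.2 (by nlinarith))
    · refine div_pos ?_ (by linarith)
      exact sub_pos.2 (exp_lt_exp.2 (by nlinarith))
  have hpdens : pdens a b η x =
      2 * a * b * η * ((exp (-(2 * b * x)) - exp (-(a * x))) / (a - 2 * b)) := by
    unfold pdens
    ring
  rw [hpdens]
  positivity

theorem integral_pdens {a b : ℝ} (ha : a ≠ 0) (hb : b ≠ 0) (hab : a ≠ 2 * b) (η T : ℝ) :
    ∫ x in (0:ℝ)..T, pdens a b η x = pdet a b η T := by
  unfold pdens pdet
  rw [intervalIntegral.integral_const_mul, intervalIntegral.integral_sub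
    (Continuous.intervalIntegrable (by fun_prop) _ _)
    (Continuous.intervalIntegrable (by fun_prop) _ _),
    integral_exp_neg_mul (by positivity), integral_exp_neg_mul ha]
  simp only [mul_zero, neg_zero, exp_zero]
  field_simp
  ring

theorem pdet_pos {a b η T : ℝ} (ha : 0 < a) (hb : 0 < b) (hη : 0 < η) (hab : a ≠ 2 * b)
    (hT : 0 < T) : 0 < pdet a b η T := by
  rw [← integral_pdens ha.ne' hb.ne' hab]
  exact intervalIntegral.intervalIntegral_pos_of_pos_on
    (Continuous.intervalIntegrable (by unfold pdens; fun_prop) _ _)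
    (fun x hx => pdens_pos ha hb hη hab hx.1) hT

theorem integral_pdens_mul_windowLength {a b : ℝ} (ha : a ≠ 0) (hb : b ≠ 0) (η : ℝ) {τ T : ℝ}
    (hτ0 : 0 ≤ τ) (hτT : τ ≤ T) :
    ∫ x in (0:ℝ)..T, pdens a b η x * windowLength τ T x =
      2 * a * b * η / (a - 2 * b) *
        ((1 + 2 * b * τ - exp (-(2 * b * τ)) +
            exp (-(2 * b * T)) * (1 - 2 * b * τ - exp (2 * b * τ))) / (2 * b) ^ 2 -
          (1 + a * τ - exp (-(a * τ)) + exp (-(a * T)) * (1 - a * τ - exp (a * τ))) / a ^ 2) := by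
  have hsplit (x : ℝ) : pdens a b η x * windowLength τ T x = 2 * a * b * η / (a - 2 * b) *
      (windowLength τ T x * exp (-(2 * b * x)) - windowLength τ T x * exp (-(a * x))) := by
    unfold pdens
    ring
  simp only [hsplit]
  rw [intervalIntegral.integral_const_mul, intervalIntegral.integral_sub
    (Continuous.intervalIntegrable (by fun_prop) _ _)
    (Continuous.intervalIntegrable (by fun_prop) _ _),
    integral_windowLength_mul_exp_neg_mul (by positivity) hτ0 hτT,
    integral_windowLength_mul_exp_neg_mul ha hτ0 hτT]

/-- photon–dark-count coincidence probability. `X` has the conditional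
density `p_T(t) = p(t)/p_det(T)` on `[0,T]` and `Y` (a dark count) is uniform on
`[0,T]`, independent of `X`; then `P(|X-Y| ≤ τ) · p_det(T)/η` equals the stated
closed-form expression. -/
theorem photon_dark_count_coincidence_probability
    (a b η T τ : ℝ) (ha : 0 < a) (hb : 0 < b) (hη : 0 < η)
    (hab : a ≠ 2 * b) (hT : 0 < T) (hτ0 : 0 ≤ τ) (hτT : τ ≤ T) :
    (pdet a b η T / η) *
      (∫ x in (0 : ℝ)..T, ∫ y in (0 : ℝ)..T,
        (pdens a b η x / pdet a b η T) * (1 / T) *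
          (if |x - y| ≤ τ then (1 : ℝ) else 0)) =
      a / (2 * b * (a - 2 * b) * T) *
          (1 + 2 * b * τ - Real.exp (-(2 * b * τ)) +
            Real.exp (-(2 * b * T)) * (1 - 2 * b * τ - Real.exp (2 * b * τ))) -
        2 * b / (a * (a - 2 * b) * T) *
          (1 + a * τ - Real.exp (-(a * τ)) +
            Real.exp (-(a * T)) * (1 - a * τ - Real.exp (a * τ))) := by
  have hdet := (pdet_pos ha hb hη hab hT).ne'
  have hdouble : (∫ x in (0 : ℝ)..T, ∫ y in (0 : ℝ)..T,
      (pdens a b η x / pdet a b η T) * (1 / T) * (if |x - y| ≤ τ then (1 : ℝ) else 0)) =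
      (pdet a b η T * T)⁻¹ * ∫ x in (0 : ℝ)..T, pdens a b η x * windowLength τ T x := by
    rw [← intervalIntegral.integral_const_mul]
    refine integral_congr fun x _ => ?_
    rw [intervalIntegral.integral_const_mul, integral_ite_abs_sub_le_eq_windowLength x τ T hT.le]
    ring
  rw [hdouble, integral_pdens_mul_windowLength ha.ne' hb.ne' η hτ0 hτT]
  field_simp
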